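/- Let w be a non-identity permutation, r its largest descent and s the largest index with w(s) < w(r). If there is no j < r with ℓ(w t_{rs} t_{jr}) = ℓ(w) (i.e., w is 'reduced' in the maximal-transition sense), then w has no descent at any position i > w^{-1}(1); equivalently w(r+1) = 1. -/

import Mathlib

/-!
After its last descent `r` the permutation `w` increases, so `s > r` and no position strictly
between `r` and `s` carries a value between `w s` and `w r`; hence `w t_{rs}` has length
`ℓ(w) - 1`. If some `j < r` had `w j < w s`, choosing `w j` maximal among such values would make
`t_{jr}` raise the length of `w t_{rs}` back to `ℓ(w)`, contradicting reducedness. So every value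
left of `r` exceeds `w s`, and `w (r+1)` is the minimum of `w`, i.e. `0`.
-/

/-- The length of a permutation: its number of inversions. -/
def permLength {n : ℕ} (w : Equiv.Perm (Fin n)) : ℕ :=
  (Finset.univ.filter fun p : Fin n × Fin n => p.1 < p.2 ∧ w p.2 < w p.1).card

open Equiv Finset

theorem permLength_mul_swap_add_one {m : ℕ} (w : Perm (Fin m)) {a b : Fin m} (hab : a < b)
    (hw : w b < w a) (hmid : ∀ k, a < k → k < b → w k < w b ∨ w a < w k) :
    permLength (w * swap a b) + 1 = permLength w := by
  classical
  -- `hmid` makes this involution a bijection from the inversions of `w * swap a b`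
  -- onto the inversions of `w` other than `(a, b)`.
  let f : Fin m × Fin m → Fin m × Fin m := fun p =>
    if (a < p.1 ∧ p.1 < b) ∨ (a < p.2 ∧ p.2 < b) then p else (swap a b p.1, swap a b p.2)
  have hf : ∀ p, f (f p) = p := by
    rintro ⟨x, y⟩
    simp only [f, swap_apply_def]
    split_ifs <;> grind
  have hab_mem : (a, b) ∈ univ.filter fun p : Fin m × Fin m => p.1 < p.2 ∧ w p.2 < w p.1 := by
    simp [hab, hw]
  rw [permLength, permLength, ← card_erase_add_one hab_mem]
  congr 1
  refine card_nbij' f f ?_ ?_ (fun p _ => hf p) (fun p _ => hf p) <;>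
  · rintro ⟨x, y⟩ hp
    simp only [coe_erase, coe_filter, mem_univ, true_and, Set.mem_sdiff, Set.mem_ofPred_eq,
      Set.mem_singleton_iff, Perm.coe_mul, Function.comp_apply, swap_apply_def, f] at hp ⊢
    split_ifs at hp ⊢ <;> grind

theorem exists_permLength_mul_swap_eq_add_one {m : ℕ} (u : Perm (Fin m)) {j₀ c : Fin m}
    (hj₀ : j₀ < c) (hu : u j₀ < u c) :
    ∃ j < c, permLength (u * swap j c) = permLength u + 1 := by
  classical
  obtain ⟨j, hj, hjmax⟩ := exists_max_image (univ.filter fun j => j < c ∧ u j < u c) u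
    ⟨j₀, by simp [hj₀, hu]⟩
  simp only [mem_filter, mem_univ, true_and] at hj hjmax
  refine ⟨j, hj.1, ?_⟩
  have := permLength_mul_swap_add_one (u * swap j c) hj.1 (by simpa using hj.2)
    fun k hjk hkc => by
      simp only [Perm.mul_apply, swap_apply_left, swap_apply_right,
        swap_apply_of_ne_of_ne hjk.ne' hkc.ne]
      rcases lt_or_ge (u k) (u c) with hk | hk
      · exact .inl ((hjmax k ⟨hkc, hk⟩).lt_of_ne (u.injective.ne hjk.ne'))
      · exact .inr (hk.lt_of_ne (u.injective.ne hkc.ne'))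
  rwa [mul_swap_mul_self, eq_comm] at this

theorem strictMonoOn_Ici_succ_of_no_descent {n : ℕ} {α : Type*} [LinearOrder α]
    {f : Fin (n + 1) → α} (hf : Function.Injective f) {r : Fin n}
    (h : ∀ i : Fin n, r < i → ¬ f i.succ < f i.castSucc) : StrictMonoOn f (Set.Ici r.succ) := by
  refine strictMonoOn_of_lt_succ Set.ordConnected_Ici fun a ha har _ => ?_
  obtain ⟨i, rfl⟩ := (Fin.exists_castSucc_eq (i := a)).mpr
    (by rintro rfl; simp [Fin.top_eq_last] at ha)
  rw [Fin.orderSucc_castSucc]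
  exact (not_lt.mp (h i (by simpa [Fin.succ_le_castSucc_iff] using har))).lt_of_ne
    (hf.ne (by simp [Fin.ext_iff]))

theorem stmt9_general (n : ℕ) (w : Equiv.Perm (Fin (n + 1)))
    (r : Fin n) (hr : w r.succ < w r.castSucc)
    (hrmax : ∀ i : Fin n, r < i → ¬ w i.succ < w i.castSucc)
    (s : Fin (n + 1)) (hs : w s < w r.castSucc)
    (hsmax : ∀ i : Fin (n + 1), s < i → ¬ w i < w r.castSucc)
    (hnone : ∀ j : Fin (n + 1), j < r.castSucc →
      permLength (w * Equiv.swap r.castSucc s * Equiv.swap j r.castSucc) ≠ permLength w) :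
    (∀ i : Fin n, ((w⁻¹ 0 : Fin (n + 1)) : ℕ) < (i : ℕ) →
        ¬ w i.succ < w i.castSucc) ∧
      w r.succ = 0 := by
  have hinc : StrictMonoOn w (Set.Ici r.succ) :=
    strictMonoOn_Ici_succ_of_no_descent w.injective hrmax
  have hrs : r.succ ≤ s := not_lt.mp fun h => hsmax r.succ h hr
  have hrs' : r.castSucc < s := Fin.castSucc_lt_iff_succ_le.mpr hrs
  have hlen : permLength (w * swap r.castSucc s) + 1 = permLength w :=
    permLength_mul_swap_add_one w hrs' hs fun k hrk hks =>
      .inl (hinc (Fin.castSucc_lt_iff_succ_le.mp hrk) hrs hks)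
  have hs_le : ∀ j < r.castSucc, w s ≤ w j := by
    intro j₀ hj₀
    by_contra! hj₀s
    obtain ⟨j, hj, hlen'⟩ := exists_permLength_mul_swap_eq_add_one (w * swap r.castSucc s) hj₀
      (by simpa [swap_apply_of_ne_of_ne hj₀.ne (hj₀.trans hrs').ne] using hj₀s)
    exact hnone j hj (by omega)
  have hmin : ∀ x, w r.succ ≤ w x := by
    intro x
    rcases lt_trichotomy x r.castSucc with hx | rfl | hx
    · exact (hinc.monotoneOn Set.self_mem_Ici hrs hrs).trans (hs_le x hx)
    · exact hr.le
    · have hx' := Fin.castSucc_lt_iff_succ_le.mp hx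
      exact hinc.monotoneOn Set.self_mem_Ici hx' hx'
  have h0 : w r.succ = 0 := le_antisymm (by simpa using hmin (w⁻¹ 0)) (Fin.zero_le _)
  refine ⟨fun i hi => hrmax i ?_, h0⟩
  rw [Perm.inv_eq_iff_eq.mpr h0.symm, Fin.val_succ] at hi
  exact Fin.lt_def.mpr (by omega)

/-- Let `w ≠ 1`, `r` its largest descent and `s` the largest index with `w(s) < w(r)`.
If there is no `j < r` with `ℓ(w t_{rs} t_{jr}) = ℓ(w)` (i.e. `w` is reduced in the
maximal-transition sense), then `w` has no descent at any position after the position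
of the value `1`; equivalently `w(r+1) = 1`. -/
theorem stmt9 (n : ℕ) (w : Equiv.Perm (Fin (n + 1))) (hw : w ≠ 1)
    (r : Fin n) (hr : w r.succ < w r.castSucc)
    (hrmax : ∀ i : Fin n, r < i → ¬ w i.succ < w i.castSucc)
    (s : Fin (n + 1)) (hs : w s < w r.castSucc)
    (hsmax : ∀ i : Fin (n + 1), s < i → ¬ w i < w r.castSucc)
    (hnone : ∀ j : Fin (n + 1), j < r.castSucc →
      permLength (w * Equiv.swap r.castSucc s * Equiv.swap j r.castSucc) ≠ permLength w) :
    (∀ i : Fin n, ((w⁻¹ 0 : Fin (n + 1)) : ℕ) < (i : ℕ) →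
        ¬ w i.succ < w i.castSucc) ∧
      w r.succ = 0 :=
  stmt9_general n w r hr hrmax s hs hsmax hnone
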